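/- arXiv:2411.08264 — 2 statements merged into one kernel-verified Lean document; each statement's English description precedes it below -/
import Mathlib

section
/- For a fixed positive integer N_t and fixed real numbers δ and ψ, define the normalized array‑gain magnitude F(ω) = |∑_{n=1}^{N_t} e^{i(n−1)πψ} g_n(ω)| / √(∑_{n=1}^{N_t} g_n(ω)²), where g_n(ω) = Sa(δ(ω − (n−1)π)). Then F is symmetric about ω = (N_t − 1)π/2, i.e. F((N_t − 1)π − ω) = F(ω) for every real ω. (This is Theorem 1: the beamforming gain magnitude |a^H(S) f(δ,ω)| of the unit‑power adaptive‑beamwidth precoder is symmetric about ω = (N_t−1)π/2.) -/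
open Real Finset

/-- The normalized sample function `Sa x = sin x / x` with `Sa 0 = 1`. -/
noncomputable def Sa (x : ℝ) : ℝ := if x = 0 then 1 else Real.sin x / x

/-- `g δ n ω = Sa (δ (ω − (n−1)π))`. -/
noncomputable def g (δ : ℝ) (n : ℕ) (ω : ℝ) : ℝ := Sa (δ * (ω - ((n : ℝ) - 1) * π))

/-- The normalized array-gain magnitude
`F(ω) = |∑_{n=1}^{N_t} e^{i(n−1)πψ} g_n(ω)| / √(∑_{n=1}^{N_t} g_n(ω)²)`. -/
noncomputable def F (Nt : ℕ) (δ ψ : ℝ) (ω : ℝ) : ℝ :=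
  ‖∑ n ∈ Finset.Icc 1 Nt,
      Complex.exp (Complex.I * ((((n : ℝ) - 1) * π * ψ : ℝ) : ℂ)) * ((g δ n ω : ℝ) : ℂ)‖ /
    Real.sqrt (∑ n ∈ Finset.Icc 1 Nt, (g δ n ω) ^ 2)

/-! Because `Sa` is even, reflecting `ω` about `(N_t − 1)π/2` reverses the samples,
`g_n ↦ g_{N_t+1−n}`. The sum of squares in the denominator does not see the order. In the
numerator, reversing real coefficients against the phases `e^{i(n−1)θ}` turns the sum into
`e^{i(N_t−1)θ}` times its complex conjugate, which has the same modulus. -/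

lemma Sa_neg (x : ℝ) : Sa (-x) = Sa x := by
  unfold Sa
  rcases eq_or_ne x 0 with rfl | hx
  · simp
  · rw [if_neg (neg_ne_zero.mpr hx), if_neg hx, Real.sin_neg, neg_div_neg_eq]

lemma g_reflect (δ ω : ℝ) {N n : ℕ} (hn : n ≤ N + 1) :
    g δ n (((N : ℝ) - 1) * π - ω) = g δ (N + 1 - n) ω := by
  rw [g, g, Nat.cast_sub hn, ← Sa_neg]
  push_cast
  ring_nf

lemma sum_Icc_one_reflect {M : Type*} [AddCommMonoid M] (N : ℕ) (f : ℕ → M) :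
    ∑ n ∈ Icc 1 N, f (N + 1 - n) = ∑ n ∈ Icc 1 N, f n := by
  simpa [Finset.Ico_add_one_right_eq_Icc] using sum_Ico_reflect f 1 (Nat.le_succ (N + 1))

lemma norm_sum_exp_mul_reverse (N : ℕ) (θ : ℝ) (w : ℕ → ℝ) :
    ‖∑ n ∈ Icc 1 N, Complex.exp (Complex.I * ((((n : ℝ) - 1) * θ : ℝ) : ℂ)) * (w (N + 1 - n) : ℂ)‖ =
      ‖∑ n ∈ Icc 1 N, Complex.exp (Complex.I * ((((n : ℝ) - 1) * θ : ℝ) : ℂ)) * (w n : ℂ)‖ := by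
  have hconj : ∑ n ∈ Icc 1 N,
        Complex.exp (Complex.I * ((((n : ℝ) - 1) * θ : ℝ) : ℂ)) * (w (N + 1 - n) : ℂ) =
      Complex.exp (Complex.I * ((((N : ℝ) - 1) * θ : ℝ) : ℂ)) * starRingEnd ℂ
        (∑ n ∈ Icc 1 N, Complex.exp (Complex.I * ((((n : ℝ) - 1) * θ : ℝ) : ℂ)) * (w n : ℂ)) := by
    rw [map_sum, mul_sum]
    conv_rhs => rw [← sum_Icc_one_reflect N]
    refine sum_congr rfl fun n hn => ?_
    obtain ⟨h1, hN⟩ := mem_Icc.mp hn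
    rw [Nat.cast_sub (by omega), map_mul, ← Complex.exp_conj,
      Complex.conj_ofReal, ← mul_assoc, ← Complex.exp_add]
    congr 2
    simp only [map_mul, Complex.conj_I, Complex.conj_ofReal]
    push_cast
    ring
  rw [hconj, norm_mul, Complex.norm_exp_I_mul_ofReal, one_mul, Complex.norm_conj]

theorem F_symm_general (Nt : ℕ) (δ ψ : ℝ) :
    ∀ ω : ℝ, F Nt δ ψ (((Nt : ℝ) - 1) * π - ω) = F Nt δ ψ ω := by
  intro ω
  have hg : ∀ n ∈ Icc 1 Nt, g δ n (((Nt : ℝ) - 1) * π - ω) = g δ (Nt + 1 - n) ω :=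
    fun n hn => g_reflect δ ω (by rw [mem_Icc] at hn; omega)
  rw [F, F, sum_congr rfl fun n hn => congrArg (fun x : ℝ => Complex.exp _ * (x : ℂ)) (hg n hn),
    sum_congr rfl fun n hn => congrArg (· ^ 2) (hg n hn), sum_Icc_one_reflect Nt fun n => g δ n ω ^ 2]
  congr 1
  simpa only [mul_assoc] using norm_sum_exp_mul_reverse Nt (π * ψ) (g δ · ω)

/-- Theorem 1: the beamforming gain magnitude is symmetric about `ω = (N_t − 1)π/2`. -/
theorem F_symm (Nt : ℕ) (hNt : 0 < Nt) (δ ψ : ℝ) :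
    ∀ ω : ℝ, F Nt δ ψ (((Nt : ℝ) - 1) * π - ω) = F Nt δ ψ ω :=
  F_symm_general Nt δ ψ
end

section
/- Let N_t be a positive integer and let D = {(m,n) ∈ ℤ × ℤ : 1 ≤ n ≤ N_t − 1 and n + 1 ≤ m ≤ N_t}. Let Δ be an integer with 1 ≤ Δ ≤ N_t − 2, and set D₁ = {(m,n) ∈ D : m + n = N_t + 1 + Δ} and D₂ = {(m,n) ∈ D : m + n = N_t + 1 − Δ}. Then for every integer x₀, the number of pairs (m,n) ∈ D₁ with m − n = x₀ equals the number of pairs (m',n') ∈ D₂ with m' − n' = x₀. (Lemma 3, restated in counting form: the difference m − n has the same distribution under the uniform distributions on D₁ and on D₂.) -/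
open Finset

/-- The index set `D = {(m,n) : 1 ≤ n ≤ N_t − 1, n + 1 ≤ m ≤ N_t}` of integer pairs. -/
noncomputable def D (Nt : ℕ) : Finset (ℤ × ℤ) :=
  (Finset.Icc (1 : ℤ) (Nt : ℤ) ×ˢ Finset.Icc (1 : ℤ) (Nt : ℤ)).filter
    (fun p => 1 ≤ p.2 ∧ p.2 ≤ (Nt : ℤ) - 1 ∧ p.2 + 1 ≤ p.1 ∧ p.1 ≤ (Nt : ℤ))

/-! The anti-transpose `(m, n) ↦ (N_t + 1 - n, N_t + 1 - m)` maps `D` onto itself, keeps the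
difference `m - n` and sends the sum `m + n` to `2 (N_t + 1) - (m + n)`; being an involution, it
matches the pairs with `m + n = N_t + 1 + Δ` and difference `x₀` with those with
`m + n = N_t + 1 - Δ` and difference `x₀`. -/

def antiTranspose (c : ℤ) (p : ℤ × ℤ) : ℤ × ℤ := (c - p.2, c - p.1)

lemma antiTranspose_involutive (c : ℤ) : Function.Involutive (antiTranspose c) := fun p => by
  simp [antiTranspose]

lemma antiTranspose_mem_D_iff {Nt : ℕ} {p : ℤ × ℤ} :
    antiTranspose (Nt + 1) p ∈ D Nt ↔ p ∈ D Nt := by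
  simp only [D, antiTranspose, mem_filter, mem_product, mem_Icc]
  omega

theorem card_D_filter_add_sub_eq_of_add_eq (Nt : ℕ) {s t : ℤ} (hst : s + t = 2 * (Nt + 1))
    (x : ℤ) :
    #((D Nt).filter fun p => p.1 + p.2 = s ∧ p.1 - p.2 = x) =
      #((D Nt).filter fun p => p.1 + p.2 = t ∧ p.1 - p.2 = x) := by
  refine card_equiv ((antiTranspose_involutive (Nt + 1)).toPerm _) fun p => ?_
  simp only [mem_filter, Function.Involutive.coe_toPerm, antiTranspose_mem_D_iff]
  refine and_congr_right fun _ => ?_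
  simp only [antiTranspose]
  omega

theorem lemma3_counting_general (Nt : ℕ) (Δ : ℤ) (x₀ : ℤ) :
    ((D Nt).filter (fun p => p.1 + p.2 = (Nt : ℤ) + 1 + Δ ∧ p.1 - p.2 = x₀)).card =
      ((D Nt).filter (fun p => p.1 + p.2 = (Nt : ℤ) + 1 - Δ ∧ p.1 - p.2 = x₀)).card :=
  card_D_filter_add_sub_eq_of_add_eq Nt (by ring) x₀

/-- Lemma 3 (counting form): for `1 ≤ Δ ≤ N_t − 2`, within the fibers
`D₁ = {(m,n) ∈ D : m + n = N_t + 1 + Δ}` and `D₂ = {(m,n) ∈ D : m + n = N_t + 1 − Δ}`,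
each value `x₀` of the difference `m − n` occurs equally often. -/
theorem lemma3_counting (Nt : ℕ) (hNt : 0 < Nt) (Δ : ℤ) (hΔ1 : 1 ≤ Δ)
    (hΔ2 : Δ ≤ (Nt : ℤ) - 2) (x₀ : ℤ) :
    ((D Nt).filter (fun p => p.1 + p.2 = (Nt : ℤ) + 1 + Δ ∧ p.1 - p.2 = x₀)).card =
      ((D Nt).filter (fun p => p.1 + p.2 = (Nt : ℤ) + 1 - Δ ∧ p.1 - p.2 = x₀)).card :=
  lemma3_counting_general Nt Δ x₀
end
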